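/- With P_X defined as the projection P_X(Y) = P₁·Y·P₂^⊥ + Y·P₂ (P₁, P₂ projections onto the column and row spaces of X), for any two m₁×m₂ matrices X and X̃ one has ‖X‖₁ - ‖X̃‖₁ ≤ ‖P_X(X̃ - X)‖₁, where ‖·‖₁ is the nuclear norm. -/

import Mathlib

open Matrix

noncomputable def singularValues {m n : ℕ} (A : Matrix (Fin m) (Fin n) ℝ) : Fin n → ℝ :=
  fun i => Real.sqrt ((Matrix.isHermitian_conjTranspose_mul_self A).eigenvalues i)

noncomputable def nuclearNorm {m n : ℕ} (A : Matrix (Fin m) (Fin n) ℝ) : ℝ :=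
  ∑ i, singularValues A i

noncomputable def opNorm {m n : ℕ} (A : Matrix (Fin m) (Fin n) ℝ) : ℝ :=
  ⨆ i, singularValues A i

noncomputable def frobNorm {m n : ℕ} (A : Matrix (Fin m) (Fin n) ℝ) : ℝ :=
  Real.sqrt (∑ i, ∑ j, (A i j) ^ 2)

structure IsOrthProjOnto {k : ℕ} (P : Matrix (Fin k) (Fin k) ℝ) (V : Submodule ℝ (Fin k → ℝ)) : Prop where
  symm : Pᵀ = P
  idem : P * P = P
  range : LinearMap.range P.mulVecLin = V

/-! Let `W = U Vᵀ` be the polar factor of a singular value decomposition `X = U Σ Vᵀ`. It is a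
contraction with `tr (Wᵀ X) = ‖X‖₁`, and `tr (Bᵀ M) ≤ ‖M‖₁` for every contraction `B`. The
columns of `W` lie in the column space of `X`, so `Wᵀ P₁ = Wᵀ` and therefore
`Wᵀ (P₁ Δ (1 - P₂) + Δ P₂) = Wᵀ Δ` for `Δ = X̃ - X`. Hence
`‖X‖₁ - ‖X̃‖₁ ≤ tr (Wᵀ X) - tr (Wᵀ X̃) = tr ((-W)ᵀ P_X(Δ)) ≤ ‖P_X(Δ)‖₁`. -/

namespace Matrix

theorem dotProduct_le_sqrt_mul_sqrt {n : Type*} [Fintype n] (a b : n → ℝ) :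
    a ⬝ᵥ b ≤ √(a ⬝ᵥ a) * √(b ⬝ᵥ b) := by
  simpa only [dotProduct, sq] using Real.sum_mul_le_sqrt_mul_sqrt Finset.univ a b

theorem trace_eq_sum_dotProduct_mulVec {n : Type*} [Fintype n] [DecidableEq n]
    (C : Matrix n n ℝ) (b : OrthonormalBasis n ℝ (EuclideanSpace ℝ n)) :
    C.trace = ∑ i, (b i).ofLp ⬝ᵥ (C *ᵥ (b i).ofLp) := by
  rw [← trace_toLin_eq C (PiLp.basisFun 2 ℝ n), ← toLpLin_eq_toLin,
    LinearMap.trace_eq_sum_inner _ b]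
  simp [EuclideanSpace.inner_eq_star_dotProduct, dotProduct_comm]

theorem IsHermitian.trace_cfc {n : Type*} [Fintype n] [DecidableEq n] {A : Matrix n n ℝ}
    (hA : A.IsHermitian) (f : ℝ → ℝ) : (cfc f A).trace = ∑ i, f (hA.eigenvalues i) := by
  rw [hA.cfc_eq, IsHermitian.cfc, Unitary.conjStarAlgAut_apply, trace_mul_cycle,
    Unitary.coe_star_mul_self, one_mul, trace_diagonal]
  rfl

theorem dotProduct_self_nonneg {n : Type*} [Fintype n] (v : n → ℝ) : 0 ≤ v ⬝ᵥ v :=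
  Finset.sum_nonneg fun i _ => mul_self_nonneg (v i)

def IsContraction {m n : Type*} [Fintype m] [Fintype n] (B : Matrix m n ℝ) : Prop :=
  ∀ x : n → ℝ, (B *ᵥ x) ⬝ᵥ (B *ᵥ x) ≤ x ⬝ᵥ x

variable {m n : Type*} [Fintype m] [Fintype n] {B : Matrix m n ℝ}

theorem IsContraction.neg (hB : B.IsContraction) : (-B).IsContraction := by
  simpa [IsContraction, neg_mulVec] using hB

theorem mulVec_dotProduct_mulVec_self (x : n → ℝ) :
    (B *ᵥ x) ⬝ᵥ (B *ᵥ x) = x ⬝ᵥ ((Bᵀ * B) *ᵥ x) := by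
  rw [← mulVec_mulVec, mulVec_transpose, dotProduct_comm x, dotProduct_mulVec]

/-- With `Q = BᵀB` a projection, `‖Bx‖² = ⟪Qx, x⟫ ≤ ‖Qx‖ ‖x‖ = ‖Bx‖ ‖x‖`. -/
theorem isContraction_of_isIdempotentElem (h : IsIdempotentElem (Bᵀ * B)) :
    B.IsContraction := by
  intro x
  set Q := Bᵀ * B
  have hQ : (Q *ᵥ x) ⬝ᵥ (Q *ᵥ x) = (B *ᵥ x) ⬝ᵥ (B *ᵥ x) := by
    rw [mulVec_dotProduct_mulVec_self, mulVec_dotProduct_mulVec_self (B := B),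
      show Qᵀ = Q by simp [Q], h.eq]
  have hcs := dotProduct_le_sqrt_mul_sqrt (Q *ᵥ x) x
  rw [hQ, dotProduct_comm, ← mulVec_dotProduct_mulVec_self] at hcs
  nlinarith [Real.sqrt_nonneg ((B *ᵥ x) ⬝ᵥ (B *ᵥ x)), Real.sqrt_nonneg (x ⬝ᵥ x),
    Real.mul_self_sqrt (dotProduct_self_nonneg (B *ᵥ x)),
    Real.mul_self_sqrt (dotProduct_self_nonneg x),
    sq_nonneg (√(x ⬝ᵥ x) - √((B *ᵥ x) ⬝ᵥ (B *ᵥ x)))]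

end Matrix

/-- In an orthonormal eigenbasis `vᵢ` of `MᵀM`, `tr (Bᵀ M) = ∑ ⟪B vᵢ, M vᵢ⟫` and `‖M vᵢ‖ = σᵢ`. -/
theorem trace_transpose_mul_le_nuclearNorm {m n : ℕ} {B : Matrix (Fin m) (Fin n) ℝ}
    (hB : B.IsContraction) (M : Matrix (Fin m) (Fin n) ℝ) :
    (Bᵀ * M).trace ≤ nuclearNorm M := by
  have hH := isHermitian_conjTranspose_mul_self M
  rw [trace_eq_sum_dotProduct_mulVec _ hH.eigenvectorBasis, nuclearNorm]
  refine Finset.sum_le_sum fun i _ => ?_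
  set v := (hH.eigenvectorBasis i).ofLp
  have hv : v ⬝ᵥ v = 1 := by
    have := hH.eigenvectorBasis.inner_eq_one i
    rwa [EuclideanSpace.inner_eq_star_dotProduct, star_trivial] at this
  have hMv : (M *ᵥ v) ⬝ᵥ (M *ᵥ v) = hH.eigenvalues i := by
    rw [mulVec_dotProduct_mulVec_self, ← conjTranspose_eq_transpose_of_trivial,
      hH.mulVec_eigenvectorBasis, dotProduct_smul, hv, smul_eq_mul, mul_one]
  calc v ⬝ᵥ ((Bᵀ * M) *ᵥ v) = (B *ᵥ v) ⬝ᵥ (M *ᵥ v) := by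
        rw [← mulVec_mulVec, dotProduct_mulVec, vecMul_transpose]
    _ ≤ √((B *ᵥ v) ⬝ᵥ (B *ᵥ v)) * √((M *ᵥ v) ⬝ᵥ (M *ᵥ v)) := dotProduct_le_sqrt_mul_sqrt _ _
    _ ≤ 1 * √(hH.eigenvalues i) := by
        rw [hMv]
        gcongr
        exact Real.sqrt_le_one.mpr (hv ▸ hB v)
    _ = singularValues M i := one_mul _

/-- The factor `U Vᵀ` of a singular value decomposition `X = U Σ Vᵀ`, written as `X (XᵀX)^(-1/2)`:
since `(√0)⁻¹ = 0`, the function `t ↦ (√t)⁻¹` inverts the square root exactly on the support of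
`XᵀX`. -/
noncomputable def polarFactor {m n : Type*} [Fintype m] [Fintype n] [DecidableEq n]
    (X : Matrix m n ℝ) : Matrix m n ℝ :=
  X * cfc (fun t : ℝ => (√t)⁻¹) (Xᴴ * X)

section PolarFactor

variable {m n : Type*} [Fintype m] [Fintype n] [DecidableEq n] (X : Matrix m n ℝ)

theorem transpose_polarFactor_mul : (polarFactor X)ᵀ * X = cfc (fun t : ℝ => √t) (Xᴴ * X) := by
  have hA : IsSelfAdjoint (Xᴴ * X) := isHermitian_conjTranspose_mul_self X
  have hsymm : (cfc (fun t : ℝ => (√t)⁻¹) (Xᴴ * X))ᵀ = cfc (fun t : ℝ => (√t)⁻¹) (Xᴴ * X) := by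
    rw [← conjTranspose_eq_transpose_of_trivial, ← star_eq_conjTranspose]
    exact IsSelfAdjoint.cfc
  calc (polarFactor X)ᵀ * X
        = cfc (fun t : ℝ => (√t)⁻¹) (Xᴴ * X) * cfc (fun t : ℝ => t) (Xᴴ * X) := by
        rw [cfc_id' ℝ _ hA, polarFactor, transpose_mul, hsymm, Matrix.mul_assoc,
          conjTranspose_eq_transpose_of_trivial]
    _ = cfc (fun t : ℝ => √t) (Xᴴ * X) := by
        rw [← cfc_mul _ _ _ ((Set.toFinite _).continuousOn _) ((Set.toFinite _).continuousOn _)]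
        simp only [inv_mul_eq_div, Real.div_sqrt]

theorem isContraction_polarFactor : (polarFactor X).IsContraction := by
  have hcont (f : ℝ → ℝ) : ContinuousOn f (spectrum ℝ (Xᴴ * X)) := (Set.toFinite _).continuousOn f
  apply isContraction_of_isIdempotentElem
  have hWW : (polarFactor X)ᵀ * polarFactor X = cfc (fun t : ℝ => √t * (√t)⁻¹) (Xᴴ * X) := by
    calc (polarFactor X)ᵀ * polarFactor X
        = (polarFactor X)ᵀ * X * cfc (fun t : ℝ => (√t)⁻¹) (Xᴴ * X) :=
          (Matrix.mul_assoc _ _ _).symm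
      _ = _ := by rw [transpose_polarFactor_mul, cfc_mul _ _ _ (hcont _) (hcont _)]
  rw [hWW, IsIdempotentElem, ← cfc_mul _ _ _ (hcont _) (hcont _)]
  congr 1
  funext t
  by_cases ht : √t = 0 <;> simp [ht]

end PolarFactor

theorem trace_transpose_polarFactor_mul {m n : ℕ} (X : Matrix (Fin m) (Fin n) ℝ) :
    ((polarFactor X)ᵀ * X).trace = nuclearNorm X := by
  rw [transpose_polarFactor_mul, (isHermitian_conjTranspose_mul_self X).trace_cfc]
  rfl

theorem IsOrthProjOnto.mul_eq_self {k l : ℕ} {P : Matrix (Fin k) (Fin k) ℝ}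
    {A : Matrix (Fin k) (Fin l) ℝ} (hP : IsOrthProjOnto P (LinearMap.range A.mulVecLin)) :
    P * A = A := by
  refine ext_iff_mulVec.mpr fun v => ?_
  obtain ⟨u, hu⟩ : A *ᵥ v ∈ LinearMap.range P.mulVecLin := hP.range ▸ ⟨v, rfl⟩
  rw [← mulVec_mulVec, ← hu, mulVecLin_apply, mulVec_mulVec, hP.idem]

theorem IsOrthProjOnto.transpose_polarFactor_mul {k l : ℕ} {P : Matrix (Fin k) (Fin k) ℝ}
    {X : Matrix (Fin k) (Fin l) ℝ} (hP : IsOrthProjOnto P (LinearMap.range X.mulVecLin)) :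
    (polarFactor X)ᵀ * P = (polarFactor X)ᵀ := by
  rw [← hP.symm, ← transpose_mul, polarFactor, ← Matrix.mul_assoc, hP.mul_eq_self]

theorem nuclearNorm_sub_le_proj_general {m₁ m₂ : ℕ} (X Xt : Matrix (Fin m₁) (Fin m₂) ℝ)
    (P₁ : Matrix (Fin m₁) (Fin m₁) ℝ) (P₂ : Matrix (Fin m₂) (Fin m₂) ℝ)
    (hP₁ : IsOrthProjOnto P₁ (LinearMap.range X.mulVecLin)) :
    nuclearNorm X - nuclearNorm Xt ≤
      nuclearNorm (P₁ * (Xt - X) * (1 - P₂) + (Xt - X) * P₂) := by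
  set W := polarFactor X
  have hW : W.IsContraction := isContraction_polarFactor X
  have hWP : Wᵀ * P₁ = Wᵀ := hP₁.transpose_polarFactor_mul
  have hproj : Wᵀ * (P₁ * (Xt - X) * (1 - P₂) + (Xt - X) * P₂) = Wᵀ * Xt - Wᵀ * X := by
    simp only [Matrix.mul_add, Matrix.mul_sub, Matrix.sub_mul, Matrix.mul_one, ← Matrix.mul_assoc,
      hWP]
    abel
  have hXt := trace_transpose_mul_le_nuclearNorm hW Xt
  have hproj_le := trace_transpose_mul_le_nuclearNorm hW.neg
    (P₁ * (Xt - X) * (1 - P₂) + (Xt - X) * P₂)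
  rw [transpose_neg, Matrix.neg_mul, trace_neg, hproj, trace_sub,
    trace_transpose_polarFactor_mul] at hproj_le
  linarith

theorem nuclearNorm_sub_le_proj {m₁ m₂ : ℕ} (X Xt : Matrix (Fin m₁) (Fin m₂) ℝ)
    (P₁ : Matrix (Fin m₁) (Fin m₁) ℝ) (P₂ : Matrix (Fin m₂) (Fin m₂) ℝ)
    (hP₁ : IsOrthProjOnto P₁ (LinearMap.range X.mulVecLin))
    (hP₂ : IsOrthProjOnto P₂ (LinearMap.range Xᵀ.mulVecLin)) :
    nuclearNorm X - nuclearNorm Xt ≤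
      nuclearNorm (P₁ * (Xt - X) * (1 - P₂) + (Xt - X) * P₂) :=
  nuclearNorm_sub_le_proj_general X Xt P₁ P₂ hP₁
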